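/- Let φ ∈ PPU⁺(A) and let t denote the element t·1 ∈ PPU⁺(A). Then φ ≤ t (i.e. φ⁻¹t = tφ* ∈ PPU⁺(A)) if and only if φ = p_M for some closed A'-invariant subspace M of H. Thus the interval [1, t] in PPU(A) consists exactly of the elements p_M, M ∈ X(A'). -/

import Mathlib

noncomputable section

/-- Finite Laurent polynomials `A[t,t⁻¹]` with coefficients among the bounded operators
on `H`, with convolution product. -/
abbrev LaurentOp (H : Type*) [NormedAddCommGroup H] [InnerProductSpace ℂ H]
    [CompleteSpace H] : Type _ :=
  AddMonoidAlgebra (H →L[ℂ] H) ℤ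

variable {H : Type*} [NormedAddCommGroup H] [InnerProductSpace ℂ H] [CompleteSpace H]

/-- The involution `φ* = Σ tⁱ (φ₋ᵢ)*` on `B(H)[t,t⁻¹]` (with `*` the adjoint). -/
def lstar (φ : LaurentOp H) : LaurentOp H :=
  AddMonoidAlgebra.ofCoeff (Finsupp.equivMapDomain (Equiv.neg ℤ) (Finsupp.mapRange star (star_zero _) φ.coeff))

/-- The specialization `ε₁(φ) = Σᵢ φᵢ`. -/
def eps1 (φ : LaurentOp H) : H →L[ℂ] H := φ.coeff.sum fun _ a => a

/-- Membership in `PPU(A)`: all coefficients of `φ` lie in the von Neumann algebra `A`,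
`φ` is paraunitary (`φ*φ = φφ* = 1`), and `ε₁(φ) = 1`. -/
def InPPU (A : VonNeumannAlgebra H) (φ : LaurentOp H) : Prop :=
  (∀ i, φ.coeff i ∈ A) ∧ lstar φ * φ = 1 ∧ φ * lstar φ = 1 ∧ eps1 φ = 1

/-- Membership in `PPU⁺(A) = PPU(A) ∩ A[t]`. -/
def InPPUplus (A : VonNeumannAlgebra H) (φ : LaurentOp H) : Prop :=
  InPPU A φ ∧ ∀ i < (0 : ℤ), φ.coeff i = 0

/-- The action of a Laurent polynomial on a two-sided sequence:
`(φx)ᵢ = Σ_k φ_k (x_{i−k})`. -/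
def act (φ : LaurentOp H) (x : ℤ → H) : ℤ → H :=
  fun i => ∑ k ∈ φ.coeff.support, φ.coeff k (x (i - k))

/-- `tⁿH[[t⁻¹]]`: the square-summable sequences (i.e. elements of
`H[[t,t⁻¹]] = ℓ²(ℤ,H)`) vanishing in all degrees `> n`. -/
def Hmn (H : Type*) [NormedAddCommGroup H] [InnerProductSpace ℂ H] [CompleteSpace H]
    (n : ℤ) : Set (ℤ → H) :=
  {x | Memℓp x 2 ∧ ∀ i > n, x i = 0}

/-- `φ·H[[t⁻¹]]`, the image of `H[[t⁻¹]] = t⁰H[[t⁻¹]]` under the action of `φ`. -/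
def actH (φ : LaurentOp H) : Set (ℤ → H) := act φ '' Hmn H 0

/-- `S` is a closed linear subspace of `H[[t,t⁻¹]] = ℓ²(ℤ,H)` which is invariant under
the actions of the commutant `A'` (acting coefficientwise) and of `t⁻¹` (the shift). -/
def IsInvClosed (A : VonNeumannAlgebra H) (S : Set (ℤ → H)) : Prop :=
  (∀ x ∈ S, Memℓp x 2) ∧
  IsClosed {y : lp (fun _ : ℤ => H) 2 | (y : ℤ → H) ∈ S} ∧
  (0 ∈ S) ∧ (∀ x ∈ S, ∀ y ∈ S, x + y ∈ S) ∧ (∀ (c : ℂ), ∀ x ∈ S, c • x ∈ S) ∧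
  (∀ x ∈ S, (fun i => x (i + 1)) ∈ S) ∧
  (∀ ψ ∈ A.commutant, ∀ x ∈ S, (fun i => ψ (x i)) ∈ S)

/-- The orthogonal projection `π_M` onto a closed subspace `M`, as an operator on `H`. -/
def projL (M : Submodule ℂ H) (hM : IsClosed (M : Set H)) : H →L[ℂ] H :=
  haveI : CompleteSpace M := hM.completeSpace_coe
  M.subtypeL.comp M.orthogonalProjectionOnto

/-- The element `p_M = tπ_M + π_{Mᗮ}` of `A[t,t⁻¹]`. -/
def pEl (M : Submodule ℂ H) (hM : IsClosed (M : Set H)) : LaurentOp H :=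
  AddMonoidAlgebra.ofCoeff (Finsupp.single (1 : ℤ) (projL M hM) +
    Finsupp.single (0 : ℤ) (projL Mᗮ M.isClosed_orthogonal))

/-- The element `t = t·1` of `A[t,t⁻¹]`. -/
def tEl (H : Type*) [NormedAddCommGroup H] [InnerProductSpace ℂ H] [CompleteSpace H] :
    LaurentOp H :=
  AddMonoidAlgebra.ofCoeff (Finsupp.single (1 : ℤ) 1)

/-- `M` is invariant under every element of the commutant `A'`. -/
def InvariantC (A : VonNeumannAlgebra H) (M : Submodule ℂ H) : Prop :=
  ∀ φ ∈ A.commutant, ∀ x ∈ M, φ x ∈ M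

lemma lstar_apply (φ : LaurentOp H) (i : ℤ) : (lstar φ).coeff i = star (φ.coeff (-i)) := by
  simp [lstar, Finsupp.equivMapDomain_apply]

lemma lstar_single (n : ℤ) (a : H →L[ℂ] H) :
    lstar (AddMonoidAlgebra.single n a : LaurentOp H) = AddMonoidAlgebra.single (-n) (star a) := by
  ext i : 2
  rw [lstar_apply]
  simp only [AddMonoidAlgebra.coeff_single, Finsupp.single_apply]
  by_cases h : -n = i
  · rw [if_pos h, if_pos (by omega)]
  · rw [if_neg h, if_neg (by omega), star_zero]

lemma lstar_add (φ ψ : LaurentOp H) : lstar (φ + ψ) = lstar φ + lstar ψ := by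
  ext i : 2
  rw [AddMonoidAlgebra.coeff_add, Finsupp.add_apply, lstar_apply, lstar_apply, lstar_apply,
    AddMonoidAlgebra.coeff_add, Finsupp.add_apply, star_add]

lemma eps1_single (n : ℤ) (a : H →L[ℂ] H) :
    eps1 (AddMonoidAlgebra.single n a : LaurentOp H) = a := by
  unfold eps1; rw [AddMonoidAlgebra.coeff_single]; exact Finsupp.sum_single_index rfl

lemma eps1_add (φ ψ : LaurentOp H) : eps1 (φ + ψ) = eps1 φ + eps1 ψ := by
  unfold eps1; rw [AddMonoidAlgebra.coeff_add]; exact Finsupp.sum_add_index' (fun _ => rfl) (fun _ _ _ => rfl)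

section Proj

variable (M : Submodule ℂ H) (hM : IsClosed (M : Set H))

lemma projL_apply_mem (x : H) : projL M hM x ∈ M := by
  haveI : CompleteSpace M := hM.completeSpace_coe
  exact Submodule.coe_mem (M.orthogonalProjectionOnto x)

lemma projL_eq_self_of_mem {x : H} (hx : x ∈ M) : projL M hM x = x := by
  haveI : CompleteSpace M := hM.completeSpace_coe
  exact M.starProjection_eq_self_iff.2 hx

lemma projL_eq_zero_of_mem_orth {x : H} (hx : x ∈ Mᗮ) : projL M hM x = 0 := by
  haveI : CompleteSpace M := hM.completeSpace_coe
  have := Submodule.orthogonalProjectionOnto_apply_of_mem_orthogonal (K := M) hx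
  simp [projL, this]

lemma projL_add_orth : projL M hM + projL Mᗮ M.isClosed_orthogonal = 1 := by
  haveI : CompleteSpace M := hM.completeSpace_coe
  ext x
  exact M.starProjection_add_starProjection_orthogonal x

lemma star_projL : star (projL M hM) = projL M hM := by
  haveI : CompleteSpace M := hM.completeSpace_coe
  exact isSelfAdjoint_starProjection M

lemma projL_mul_orth : projL M hM * projL Mᗮ M.isClosed_orthogonal = 0 := by
  ext x
  exact projL_eq_zero_of_mem_orth M hM (projL_apply_mem _ _ x)

lemma orth_mul_projL : projL Mᗮ M.isClosed_orthogonal * projL M hM = 0 := by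
  ext x
  exact projL_eq_zero_of_mem_orth Mᗮ M.isClosed_orthogonal
    (M.le_orthogonal_orthogonal (projL_apply_mem _ _ x))

lemma projL_mem (A : VonNeumannAlgebra H) (hInv : InvariantC A M) :
    projL M hM ∈ A := by
  rw [← A.commutant_commutant]
  rw [VonNeumannAlgebra.mem_commutant_iff]
  intro ψ hψ
  have horth : ∀ x ∈ Mᗮ, ψ x ∈ Mᗮ := by
    intro x hx
    rw [Submodule.mem_orthogonal]
    intro u hu
    have := ContinuousLinearMap.adjoint_inner_left ψ x u
    rw [← ContinuousLinearMap.star_eq_adjoint] at this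
    rw [← this]
    exact (Submodule.mem_orthogonal M x).1 hx _ (hInv (star ψ) (star_mem hψ) u hu)
  ext x
  have hx : x = projL M hM x + projL Mᗮ M.isClosed_orthogonal x := by
    have := congrFun (congrArg DFunLike.coe (projL_add_orth M hM)) x
    simpa using this.symm
  have h1 : ψ (projL M hM x) ∈ M := hInv ψ hψ _ (projL_apply_mem M hM x)
  have h2 : ψ (projL Mᗮ M.isClosed_orthogonal x) ∈ Mᗮ :=
    horth _ (projL_apply_mem _ _ x)
  calc (ψ * projL M hM) x = ψ (projL M hM x) := rfl
    _ = projL M hM (ψ (projL M hM x)) + projL M hM (ψ (projL Mᗮ M.isClosed_orthogonal x)) := by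
        rw [projL_eq_self_of_mem M hM h1, projL_eq_zero_of_mem_orth M hM h2, add_zero]
    _ = projL M hM (ψ (projL M hM x + projL Mᗮ M.isClosed_orthogonal x)) := by
        rw [map_add, map_add]
    _ = (projL M hM * ψ) x := by rw [← hx]; rfl

end Proj

/-- `Finsupp.single`, ascribed to `LaurentOp H` so that the convolution product instances
are used. -/
def sg (n : ℤ) (a : H →L[ℂ] H) : LaurentOp H := AddMonoidAlgebra.single n a

lemma sg_apply (n : ℤ) (a : H →L[ℂ] H) (i : ℤ) : (sg n a).coeff i = if n = i then a else 0 :=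
  Finsupp.single_apply

lemma sg_mul_sg (m p : ℤ) (a b : H →L[ℂ] H) : sg m a * sg p b = sg (m + p) (a * b) :=
  AddMonoidAlgebra.single_mul_single m p a b

lemma lstar_sg (n : ℤ) (a : H →L[ℂ] H) : lstar (sg n a) = sg (-n) (star a) :=
  lstar_single n a

lemma eps1_sg (n : ℤ) (a : H →L[ℂ] H) : eps1 (sg n a) = a := eps1_single n a

lemma one_eq_sg : (1 : LaurentOp H) = sg 0 1 := AddMonoidAlgebra.one_def

lemma sg_add_same (n : ℤ) (a b : H →L[ℂ] H) : sg n a + sg n b = sg n (a + b) :=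
  (AddMonoidAlgebra.single_add n a b).symm

lemma sg_zero (n : ℤ) : sg n (0 : H →L[ℂ] H) = 0 := AddMonoidAlgebra.single_zero n

lemma pEl_eq (M : Submodule ℂ H) (hM : IsClosed (M : Set H)) :
    pEl M hM = sg 1 (projL M hM) + sg 0 (projL Mᗮ M.isClosed_orthogonal) := rfl

lemma tEl_eq : tEl H = sg 1 1 := rfl

lemma sgsum_mul_sgsum (m n p q : ℤ) (a b c d : H →L[ℂ] H) :
    (sg m a + sg n b) * (sg p c + sg q d) =
      sg (m + p) (a * c) + sg (m + q) (a * d) + (sg (n + p) (b * c) + sg (n + q) (b * d)) := by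
  rw [add_mul, mul_add, mul_add, sg_mul_sg, sg_mul_sg, sg_mul_sg, sg_mul_sg]

lemma pair_mem_PPUplus (A : VonNeumannAlgebra H) (P Q : H →L[ℂ] H)
    (hPA : P ∈ A) (hQA : Q ∈ A) (hPs : star P = P) (hQs : star Q = Q)
    (hPQ : P * Q = 0) (hQP : Q * P = 0) (hsum : P + Q = 1) :
    InPPUplus A (sg 1 P + sg 0 Q) := by
  have hPP : P * P = P := by
    have : P * (P + Q) = P * 1 := by rw [hsum]
    rw [mul_add, hPQ, add_zero, mul_one] at this; exact this
  have hQQ : Q * Q = Q := by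
    have : Q * (P + Q) = Q * 1 := by rw [hsum]
    rw [mul_add, hQP, zero_add, mul_one] at this; exact this
  have hlstar : lstar (sg 1 P + sg 0 Q) = sg (-1) P + sg 0 Q := by
    rw [lstar_add, lstar_sg, lstar_sg, hPs, hQs, neg_zero]
  have hmul1 : lstar (sg 1 P + sg 0 Q) * (sg 1 P + sg 0 Q) = 1 := by
    rw [hlstar, sgsum_mul_sgsum, hPP, hPQ, hQP, hQQ,
      show (-1 + 1 : ℤ) = 0 by norm_num, show (-1 + 0 : ℤ) = -1 by norm_num,
      show (0 + 1 : ℤ) = 1 by norm_num, show (0 + 0 : ℤ) = 0 by norm_num,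
      sg_zero, sg_zero, add_zero, zero_add, sg_add_same, hsum, one_eq_sg]
  have hmul2 : (sg 1 P + sg 0 Q) * lstar (sg 1 P + sg 0 Q) = 1 := by
    rw [hlstar, sgsum_mul_sgsum, hPP, hPQ, hQP, hQQ,
      show (1 + -1 : ℤ) = 0 by norm_num, show (1 + 0 : ℤ) = 1 by norm_num,
      show (0 + -1 : ℤ) = -1 by norm_num, show (0 + 0 : ℤ) = 0 by norm_num,
      sg_zero, sg_zero, add_zero, zero_add, sg_add_same, hsum, one_eq_sg]
  refine ⟨⟨?_, hmul1, hmul2, ?_⟩, ?_⟩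
  · intro i
    rw [AddMonoidAlgebra.coeff_add, Finsupp.add_apply, sg_apply, sg_apply]
    by_cases h1 : (1 : ℤ) = i
    · rw [if_pos h1, if_neg (by omega), add_zero]; exact hPA
    · rw [if_neg h1]
      by_cases h0 : (0 : ℤ) = i
      · rw [if_pos h0, zero_add]; exact hQA
      · rw [if_neg h0, add_zero]; exact zero_mem A
  · rw [eps1_add, eps1_sg, eps1_sg, hsum]
  · intro i hi
    rw [AddMonoidAlgebra.coeff_add, Finsupp.add_apply, sg_apply, sg_apply, if_neg (by omega), if_neg (by omega), add_zero]

lemma lstar_pEl_mul_t (M : Submodule ℂ H) (hM : IsClosed (M : Set H)) :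
    lstar (pEl M hM) * tEl H =
      sg 1 (projL Mᗮ M.isClosed_orthogonal) + sg 0 (projL M hM) := by
  rw [pEl_eq, tEl_eq, lstar_add, lstar_sg, lstar_sg, star_projL, star_projL, neg_zero, add_mul,
    sg_mul_sg, sg_mul_sg, mul_one, mul_one,
    show (-1 + 1 : ℤ) = 0 by norm_num, show (0 + 1 : ℤ) = 1 by norm_num, add_comm]

lemma mul_sg_apply (f : LaurentOp H) (r : H →L[ℂ] H) (x y : ℤ) :
    (f * sg x r).coeff y = f.coeff (y - x) * r :=
  AddMonoidAlgebra.coeff_mul_single_apply f r x y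

lemma lop_add_apply (f g : LaurentOp H) (i : ℤ) : (f + g).coeff i = f.coeff i + g.coeff i := rfl

lemma forward_struct (A : VonNeumannAlgebra H) (φ : LaurentOp H)
    (h1 : InPPUplus A φ) (h2 : InPPUplus A (lstar φ * tEl H)) :
    ∃ (M : Submodule ℂ H) (hM : IsClosed (M : Set H)), InvariantC A M ∧ φ = pEl M hM := by
  obtain ⟨⟨hmem, hs1, hs2, he⟩, hpos⟩ := h1
  obtain ⟨_, hneg⟩ := h2
  have hvan : ∀ j : ℤ, j ≠ 0 → j ≠ 1 → φ.coeff j = 0 := by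
    intro j hj0 hj1
    rcases lt_or_ge j 0 with h | h
    · exact hpos j h
    · have h2' : (lstar φ * tEl H).coeff (1 - j) = 0 := hneg _ (by omega)
      rw [tEl_eq, mul_sg_apply, mul_one, lstar_apply] at h2'
      have h3 := congrArg star h2'
      rw [star_star, star_zero] at h3
      rw [show -(1 - j - 1) = j by ring] at h3
      exact h3
  set a := φ.coeff 0 with ha'
  set b := φ.coeff 1 with hb'
  have hφeq : φ = sg 0 a + sg 1 b := by
    apply AddMonoidAlgebra.coeff_injective; apply Finsupp.ext; intro i
    rw [lop_add_apply, sg_apply, sg_apply]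
    by_cases h0 : (0 : ℤ) = i
    · rw [if_pos h0, if_neg (by omega), add_zero, ← h0]
    · rw [if_neg h0]
      by_cases h1 : (1 : ℤ) = i
      · rw [if_pos h1, zero_add, ← h1]
      · rw [if_neg h1, add_zero]; exact hvan i (by omega) (by omega)
  have hab : a + b = 1 := by
    rw [hφeq, eps1_add, eps1_sg, eps1_sg] at he; exact he
  have hba : star b * a = 0 := by
    rw [hφeq, lstar_add, lstar_sg, lstar_sg, neg_zero, sgsum_mul_sgsum,
      show (0 + 0 : ℤ) = 0 by norm_num, show (0 + 1 : ℤ) = 1 by norm_num,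
      show (-1 + 0 : ℤ) = -1 by norm_num, show (-1 + 1 : ℤ) = 0 by norm_num] at hs1
    have e : (sg 0 (star a * a) + sg 1 (star a * b) +
        (sg (-1) (star b * a) + sg 0 (star b * b)) : LaurentOp H).coeff (-1) =
        (1 : LaurentOp H).coeff (-1) := by rw [hs1]
    rw [one_eq_sg] at e
    simp only [lop_add_apply, sg_apply] at e
    norm_num at e
    exact e
  have hda : a = 1 - b := eq_sub_of_add_eq hab
  have h1' : star b = star b * b := by
    rw [hda, mul_sub, mul_one] at hba
    exact (sub_eq_zero.1 hba)
  have hb_sa : star b = b := by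
    have h2' := congrArg star h1'
    rw [star_mul, star_star, ← h1'] at h2'
    -- h2' : b = star b
    exact h2'.symm
  have hb_idem : b * b = b :=
    calc b * b = star b * b := by rw [hb_sa]
      _ = star b := h1'.symm
      _ = b := hb_sa
  set M : Submodule ℂ H := LinearMap.ker ((1 - b : H →L[ℂ] H) : H →ₗ[ℂ] H) with hMdef
  have hM : IsClosed (M : Set H) := ContinuousLinearMap.isClosed_ker (1 - b)
  haveI : CompleteSpace M := hM.completeSpace_coe
  have hmemM : ∀ x, x ∈ M ↔ b x = x := by
    intro x
    rw [hMdef, LinearMap.mem_ker, ContinuousLinearMap.coe_coe, ContinuousLinearMap.sub_apply, ContinuousLinearMap.one_apply,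
      sub_eq_zero, eq_comm]
  have hbb : ∀ x, b (b x) = b x := by
    intro x
    exact congrFun (congrArg DFunLike.coe hb_idem) x
  have hbmem : ∀ x, b x ∈ M := fun x => (hmemM _).2 (hbb x)
  have hbP : b = projL M hM := by
    ext x
    symm
    show M.starProjection x = b x
    apply Submodule.eq_starProjection_of_mem_of_inner_eq_zero (hbmem x)
    intro w hw
    have h3 : b (x - b x) = 0 := by rw [map_sub, hbb, sub_self]
    calc inner ℂ (x - b x) w
        = inner ℂ (x - b x) (b w) := by rw [(hmemM w).1 hw]
      _ = inner ℂ (ContinuousLinearMap.adjoint b (x - b x)) w :=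
          (ContinuousLinearMap.adjoint_inner_left b w (x - b x)).symm
      _ = (0 : ℂ) := by
          rw [← ContinuousLinearMap.star_eq_adjoint, hb_sa, h3, inner_zero_left]
  refine ⟨M, hM, ?_, ?_⟩
  · intro ψ hψ x hx
    have hcom := (VonNeumannAlgebra.mem_commutant_iff.1 hψ) b (hmem 1)
    rw [hmemM]
    calc b (ψ x) = (b * ψ) x := rfl
      _ = (ψ * b) x := by rw [hcom]
      _ = ψ (b x) := rfl
      _ = ψ x := by rw [(hmemM x).1 hx]
  · have hQ : a = projL Mᗮ M.isClosed_orthogonal := by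
      have hsum := projL_add_orth M hM
      rw [hda, hbP, ← hsum]
      abel
    rw [pEl_eq, hφeq, ← hbP, ← hQ, add_comm]


/--
Let `A` be a von Neumann algebra on `H`, and let `t` denote `t·1 ∈ PPU⁺(A)`.  For
`φ ∈ PPU⁺(A)` one has `φ ≤ t` (i.e. `φ⁻¹t = φ*·t ∈ PPU⁺(A)`) if and only if `φ = p_M`
for some closed `A'`-invariant subspace `M` of `H`.  Thus the interval `[1, t]` in
`PPU(A)` consists exactly of the elements `p_M`, `M ∈ X(A')`.
-/
theorem stmt17 (A : VonNeumannAlgebra H) :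
    (∀ φ : LaurentOp H, InPPUplus A φ →
      (InPPUplus A (lstar φ * tEl H) ↔
        ∃ (M : Submodule ℂ H) (hM : IsClosed (M : Set H)),
          InvariantC A M ∧ φ = pEl M hM)) ∧
    -- the interval [1, t] in PPU(A) is precisely {p_M : M ∈ X(A')}
    (∀ φ : LaurentOp H,
      (InPPUplus A φ ∧ InPPUplus A (lstar φ * tEl H)) ↔
        ∃ (M : Submodule ℂ H) (hM : IsClosed (M : Set H)),
          InvariantC A M ∧ φ = pEl M hM) := by
  have backPair : ∀ (M : Submodule ℂ H) (hM : IsClosed (M : Set H)),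
      projL M hM ∈ A → projL Mᗮ M.isClosed_orthogonal ∈ A →
      InPPUplus A (lstar (pEl M hM) * tEl H) := by
    intro M hM hPmem hQmem
    rw [lstar_pEl_mul_t]
    exact pair_mem_PPUplus A _ _ hQmem hPmem (star_projL _ _) (star_projL _ _)
      (orth_mul_projL M hM) (projL_mul_orth M hM)
      (by rw [add_comm]; exact projL_add_orth M hM)
  have part1 : ∀ φ : LaurentOp H, InPPUplus A φ →
      (InPPUplus A (lstar φ * tEl H) ↔
        ∃ (M : Submodule ℂ H) (hM : IsClosed (M : Set H)),
          InvariantC A M ∧ φ = pEl M hM) := by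
    intro φ hφ
    constructor
    · intro h2; exact forward_struct A φ hφ h2
    · rintro ⟨M, hM, hInv, rfl⟩
      have hPmem : projL M hM ∈ A := by
        have h := hφ.1.1 1
        rw [pEl_eq, lop_add_apply, sg_apply, sg_apply, if_pos rfl, if_neg (by omega),
          add_zero] at h
        exact h
      have hQmem : projL Mᗮ M.isClosed_orthogonal ∈ A := by
        have h := hφ.1.1 0
        rw [pEl_eq, lop_add_apply, sg_apply, sg_apply, if_neg (by omega), if_pos rfl,
          zero_add] at h
        exact h
      exact backPair M hM hPmem hQmem
  refine ⟨part1, ?_⟩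
  intro φ
  constructor
  · rintro ⟨h1, h2⟩; exact forward_struct A φ h1 h2
  · rintro ⟨M, hM, hInv, rfl⟩
    have hPmem : projL M hM ∈ A := projL_mem M hM A hInv
    have hQmem : projL Mᗮ M.isClosed_orthogonal ∈ A := by
      have hsum := projL_add_orth M hM
      have h : projL Mᗮ M.isClosed_orthogonal = 1 - projL M hM := by
        rw [← hsum]; abel
      rw [h]; exact sub_mem (one_mem A) hPmem
    refine ⟨?_, backPair M hM hPmem hQmem⟩
    rw [pEl_eq]
    exact pair_mem_PPUplus A _ _ hPmem hQmem (star_projL _ _) (star_projL _ _)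
      (projL_mul_orth M hM) (orth_mul_projL M hM) (projL_add_orth M hM)
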